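/- arXiv:1807.05371 — 4 statements merged into one kernel-verified Lean document; each statement's English description precedes it below -/
import Mathlib

section
/- Let N = 2^m be a power of 2 and let K be an integer with 1 ≤ K < N/4. Define the initial sensing-tree level L = log₂N − ⌊log₂K⌋ − 2 (where ⌊log₂K⌋ denotes the floor of the base-2 logarithm of K), and let M = N·2^{−L} + 2K·L be the total number of K-AHS measurements. Then M ≤ 2K·log₂(N/K). -/
/-- **K-AHS sampling complexity (Theorem 1).**
Let `N = 2^m` and let `K` be an integer with `1 ≤ K < N/4`. With the initial
sensing-tree level `L = log₂ N − ⌊log₂ K⌋ − 2` and total number of measurements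
`M = N·2^(−L) + 2K·L`, we have `M ≤ 2K·log₂(N/K)`. -/
theorem kahs_sampling_complexity (m K : ℕ) (hK : 1 ≤ K)
    (hKN : (K : ℝ) < (2 ^ m : ℝ) / 4)
    (L : ℕ) (hL : L = m - Nat.log 2 K - 2)
    (M : ℕ) (hM : M = 2 ^ m / 2 ^ L + 2 * K * L) :
    (M : ℝ) ≤ 2 * K * Real.logb 2 ((2 ^ m : ℝ) / K) := by
  set k := Nat.log 2 K with hk
  have hKpos : (0:ℝ) < K := by exact_mod_cast hK
  -- 2^k ≤ K < 2^(k+1)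
  have hk1 : 2 ^ k ≤ K := Nat.pow_log_le_self 2 (by omega)
  have hk2 : K < 2 ^ (k + 1) := Nat.lt_pow_succ_log_self (by norm_num) K
  -- K < 2^(m-2), so k + 3 ≤ m
  have h4K : 4 * K < 2 ^ m := by
    have : (4:ℝ) * K < 2 ^ m := by
      rw [lt_div_iff₀ (by norm_num)] at hKN; linarith
    exact_mod_cast this
  have hkm : k + 3 ≤ m := by
    have h1 : 2 ^ (k + 2) < 2 ^ m := by
      calc 2 ^ (k + 2) = 4 * 2 ^ k := by ring
        _ ≤ 4 * K := by omega
        _ < 2 ^ m := h4K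
    have := (Nat.pow_lt_pow_iff_right (a := 2) (by norm_num)).mp h1
    omega
  have hLval : L = m - k - 2 := hL
  have hLm : L + (k + 2) = m := by omega
  -- 2^m / 2^L = 2^(k+2) exactly
  have hdiv : 2 ^ m / 2 ^ L = 2 ^ (k + 2) := by
    rw [← hLm, pow_add, Nat.mul_div_cancel_left _ (pow_pos (by norm_num : (0:ℕ) < 2) L)]
  -- real logb bounds
  have ht1 : (k : ℝ) ≤ Real.logb 2 K := by
    rw [Real.le_logb_iff_rpow_le (by norm_num) hKpos]
    rw [Real.rpow_natCast]
    exact_mod_cast hk1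
  have ht2 : Real.logb 2 K ≤ (k : ℝ) + 1 := by
    rw [Real.logb_le_iff_le_rpow (by norm_num) hKpos]
    have : ((k : ℝ) + 1) = ((k + 1 : ℕ) : ℝ) := by push_cast; ring
    rw [this, Real.rpow_natCast]
    exact_mod_cast hk2.le
  set t := Real.logb 2 K with htdef
  have hKt : (K : ℝ) = (2:ℝ) ^ t := (Real.rpow_logb (by norm_num) (by norm_num) hKpos).symm
  -- goal RHS rewrite
  have hrhs : Real.logb 2 ((2 ^ m : ℝ) / K) = (m : ℝ) - t := by
    rw [Real.logb_div (by positivity) (ne_of_gt hKpos)]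
    congr 1
    rw [Real.logb_pow, Real.logb_self_eq_one (by norm_num), mul_one]
  rw [hrhs]
  -- key Bernoulli step: 2^(k+2) ≤ 2K(k+2-t)
  have hs0 : (0:ℝ) ≤ (k:ℝ) + 1 - t := by linarith
  have hs1 : (k:ℝ) + 1 - t ≤ 1 := by linarith
  have hbern : (2:ℝ) ^ ((k:ℝ) + 1 - t) ≤ 1 + ((k:ℝ) + 1 - t) := by
    have := rpow_one_add_le_one_add_mul_self (s := 1) (by norm_num)
      (p := (k:ℝ) + 1 - t) hs0 hs1
    norm_num at this
    linarith
  have hkey : (2:ℝ) ^ (k + 2 : ℕ) ≤ 2 * K * ((k:ℝ) + 2 - t) := by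
    have e1 : (2:ℝ) ^ (k + 2 : ℕ) = (2:ℝ) ^ ((t + 1) + ((k:ℝ) + 1 - t)) := by
      rw [show (t + 1) + ((k:ℝ) + 1 - t) = ((k + 2 : ℕ) : ℝ) by push_cast; ring,
        Real.rpow_natCast]
    rw [e1, Real.rpow_add (by norm_num)]
    have e2 : 2 * (K:ℝ) = (2:ℝ) ^ (t + 1) := by
      rw [Real.rpow_add (by norm_num), Real.rpow_one, hKt]; ring
    rw [e2]
    have hpos : (0:ℝ) < (2:ℝ) ^ (t + 1) := Real.rpow_pos_of_pos (by norm_num) _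
    calc (2:ℝ) ^ (t+1) * (2:ℝ) ^ ((k:ℝ) + 1 - t)
        ≤ (2:ℝ) ^ (t+1) * (1 + ((k:ℝ) + 1 - t)) := by
          exact mul_le_mul_of_nonneg_left hbern hpos.le
      _ = (2:ℝ) ^ (t+1) * ((k:ℝ) + 2 - t) := by ring
  -- put it together
  have hMval : (M : ℝ) = (2:ℝ) ^ (k + 2 : ℕ) + 2 * K * L := by
    rw [hM, hdiv]; push_cast; ring
  rw [hMval]
  have hLreal : (L : ℝ) = (m : ℝ) - (k : ℝ) - 2 := by
    have : (L : ℝ) + ((k:ℝ) + 2) = (m:ℝ) := by exact_mod_cast congrArg (Nat.cast : ℕ → ℝ) hLm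
    linarith
  have : 2 * (K:ℝ) * ((m:ℝ) - t) = 2 * K * ((k:ℝ) + 2 - t) + 2 * K * ((m:ℝ) - (k:ℝ) - 2) := by
    ring
  rw [this, hLreal]
  exact add_le_add hkey le_rfl
end

section
/- For every integer K ≥ 1, the inequality 2^{⌊log₂K⌋+2} − 2K·⌊log₂K⌋ ≤ 2^{log₂K+2} − 2K·log₂K holds, where log₂K is the real base-2 logarithm of K and ⌊log₂K⌋ its integer floor; equivalently, 4·2^{⌊log₂K⌋} − 2K·⌊log₂K⌋ ≤ 4K − 2K·log₂K. -/
/-- **Key inequality in the proof of the K-AHS measurement bound.**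
For every integer `K ≥ 1`,
`2^(⌊log₂ K⌋ + 2) − 2K·⌊log₂ K⌋ ≤ 2^(log₂ K + 2) − 2K·log₂ K`,
where `log₂ K` is the real base-2 logarithm and `⌊log₂ K⌋ = Nat.log 2 K` its
integer floor. Equivalently, `4·2^(⌊log₂ K⌋) − 2K·⌊log₂ K⌋ ≤ 4K − 2K·log₂ K`. -/
theorem kahs_floor_log_inequality (K : ℕ) (hK : 1 ≤ K) :
    (2 : ℝ) ^ (Nat.log 2 K + 2) - 2 * K * (Nat.log 2 K : ℝ) ≤
      (2 : ℝ) ^ (Real.logb 2 K + 2) - 2 * K * Real.logb 2 K := by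

  have hK0 : (0:ℝ) < K := by exact_mod_cast hK
  set n := Nat.log 2 K with hn
  set x := Real.logb 2 K with hxdef
  have hxn : (n:ℝ) ≤ x := by
    rw [hxdef, show ((n:ℝ)) = Real.logb 2 ((2:ℝ)^(n:ℕ)) by
      rw [← Real.rpow_natCast, Real.logb_rpow two_pos (by norm_num)]]
    apply Real.logb_le_logb_of_le one_lt_two (by positivity)
    exact_mod_cast Nat.pow_log_le_self 2 (by omega)
  have hxn1 : x ≤ (n:ℝ) + 1 := by
    have h1 : (K:ℝ) ≤ 2 ^ (n+1) := by
      exact_mod_cast (Nat.lt_pow_succ_log_self one_lt_two K).le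
    calc x ≤ Real.logb 2 ((2:ℝ)^(n+1)) := Real.logb_le_logb_of_le one_lt_two hK0 h1
      _ = (n:ℝ) + 1 := by
          rw [← Real.rpow_natCast, Real.logb_rpow two_pos (by norm_num)]; push_cast; ring
  have hKx : (K:ℝ) = 2 ^ x := (Real.rpow_logb two_pos (by norm_num) hK0).symm
  set t := x - (n:ℝ) with htdef
  have ht0 : 0 ≤ t := by linarith
  have ht1 : t ≤ 1 := by linarith
  -- convexity: 2^(1-t) ≤ 2 - t
  have hconv : (2:ℝ) ^ (1 - t) ≤ 2 - t := by
    have h := convexOn_exp.2 (Set.mem_univ (0:ℝ)) (Set.mem_univ (Real.log 2))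
      ht0 (by linarith : (0:ℝ) ≤ 1 - t) (by ring)
    simp only [smul_eq_mul, mul_zero, zero_add, Real.exp_zero, Real.exp_log two_pos] at h
    rw [Real.rpow_def_of_pos two_pos]
    calc Real.exp (Real.log 2 * (1 - t)) = Real.exp ((1-t) * Real.log 2) := by ring_nf
      _ ≤ t * 1 + (1 - t) * 2 := h
      _ = 2 - t := by ring
  have hprod : (2:ℝ) ^ t * (2:ℝ) ^ (1 - t) = 2 := by
    rw [← Real.rpow_add two_pos]; norm_num
  have hkey : 2 ≤ (2:ℝ) ^ t * (2 - t) := by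
    calc (2:ℝ) = 2 ^ t * 2 ^ (1-t) := hprod.symm
      _ ≤ 2 ^ t * (2 - t) :=
        mul_le_mul_of_nonneg_left hconv (Real.rpow_nonneg (by norm_num) t)
  have hKsplit : (K:ℝ) = 2 ^ (n:ℕ) * 2 ^ t := by
    rw [hKx, show x = (n:ℝ) + t by rw [htdef]; ring, Real.rpow_add two_pos,
      Real.rpow_natCast]
  have hrhs : (2:ℝ) ^ (x + 2) = 4 * K := by
    rw [Real.rpow_add two_pos, ← hKx, show (2:ℝ) = ((2:ℕ):ℝ) by norm_num,
      Real.rpow_natCast]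
    norm_num; ring
  have hlhs : (2:ℝ) ^ (n + 2) = 4 * 2 ^ (n:ℕ) := by ring
  rw [hlhs, hrhs]
  have hpn : (0:ℝ) < 2 ^ (n:ℕ) := by positivity
  nlinarith [mul_le_mul_of_nonneg_left hkey (by positivity : (0:ℝ) ≤ 2 * 2 ^ (n:ℕ))]
end

section
/- Let a : ι → ℝ be a family of real coefficients over a finite index set ι and let 𝒦 ⊆ ι be a nonempty finite set of significant indices. Define u = min over nonempty subsets 𝒜 ⊆ 𝒦 of |Σ_{n∈𝒜} a_n|. Let A, B ⊆ ι be finite sets with A ∩ 𝒦 ≠ ∅ and B ∩ 𝒦 = ∅ such that Σ_{n∈A\𝒦} |a_n| + Σ_{n∈B} |a_n| < u. Then |Σ_{n∈A} a_n| > |Σ_{n∈B} a_n|; that is, the measurement over A containing significant coefficients is strictly larger in magnitude than the measurement over B containing only non-significant coefficients. -/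
/-- **Sufficient recovery condition for a single K-AHS comparison (Theorem 2).**
Let `a : ι → ℝ` be real coefficients over a finite index set `ι`, let `𝒦 ⊆ ι`
be a nonempty set of significant indices, and let
`u = min { |∑_{n∈𝒜} a n| : ∅ ≠ 𝒜 ⊆ 𝒦 }`. If `A, B ⊆ ι` satisfy `A ∩ 𝒦 ≠ ∅`,
`B ∩ 𝒦 = ∅` and `∑_{n∈A\𝒦} |a n| + ∑_{n∈B} |a n| < u`, then
`|∑_{n∈A} a n| > |∑_{n∈B} a n|`. -/
theorem kahs_significant_measurement_larger {ι : Type*} [Fintype ι] [DecidableEq ι]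
    (a : ι → ℝ) (𝒦 : Finset ι) (h𝒦 : 𝒦.Nonempty)
    (u : ℝ)
    (hu : IsLeast ((fun 𝒜 : Finset ι => |∑ n ∈ 𝒜, a n|) ''
      {𝒜 : Finset ι | 𝒜 ⊆ 𝒦 ∧ 𝒜.Nonempty}) u)
    (A B : Finset ι) (hA : (A ∩ 𝒦).Nonempty) (hB : B ∩ 𝒦 = ∅)
    (hlt : ∑ n ∈ A \ 𝒦, |a n| + ∑ n ∈ B, |a n| < u) :
    |∑ n ∈ B, a n| < |∑ n ∈ A, a n| := by
  have hsplit : ∑ n ∈ A ∩ 𝒦, a n + ∑ n ∈ A \ 𝒦, a n = ∑ n ∈ A, a n :=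
    Finset.sum_inter_add_sum_sdiff A 𝒦 a
  have hu_le : u ≤ |∑ n ∈ A ∩ 𝒦, a n| :=
    hu.2 ⟨A ∩ 𝒦, ⟨Finset.inter_subset_right, hA⟩, rfl⟩
  have h1 : |∑ n ∈ A \ 𝒦, a n| ≤ ∑ n ∈ A \ 𝒦, |a n| := Finset.abs_sum_le_sum_abs _ _
  have h2 : |∑ n ∈ B, a n| ≤ ∑ n ∈ B, |a n| := Finset.abs_sum_le_sum_abs _ _
  have h3 : |∑ n ∈ A ∩ 𝒦, a n| ≤ |∑ n ∈ A, a n| + |∑ n ∈ A \ 𝒦, a n| := by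
    have h4 : |∑ n ∈ A, a n - ∑ n ∈ A \ 𝒦, a n| ≤ |∑ n ∈ A, a n| + |∑ n ∈ A \ 𝒦, a n| :=
      abs_sub _ _
    have h5 : ∑ n ∈ A, a n - ∑ n ∈ A \ 𝒦, a n = ∑ n ∈ A ∩ 𝒦, a n := by linarith
    rwa [h5] at h4
  linarith
end

section
/- Let q ≥ 2 and R > 0 be real numbers, let N be the signal dimension, and let a ∈ ℝ^N have sorted coefficient magnitudes |a_{h_1}| ≥ … ≥ |a_{h_N}| with |a_{h_n}| = R·q^{−(n−1)} for all n (arbitrary signs). Let 1 ≤ k and k+1 ≤ m ≤ N. Define u = min over nonempty subsets 𝒜 ⊆ {h_1, …, h_k} of |Σ_{n∈𝒜} a_n| and r = Σ_{n=k+1}^{m} |a_{h_n}|. Then u > r. -/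
lemma geo_bound (q : ℝ) (hq : 2 ≤ q) (n₀ : ℕ) :
    ∀ m, n₀ ≤ m →
      ∑ n ∈ Finset.Ioc n₀ m, q ^ (-((n : ℤ) - 1)) ≤
        q ^ (-((n₀ : ℤ) - 1)) - q ^ (-((m : ℤ) - 1)) := by
  have hq0 : (0:ℝ) < q := by linarith
  have hqne : q ≠ 0 := ne_of_gt hq0
  intro m hm
  induction m, hm using Nat.le_induction with
  | base => simp
  | succ m hm ih =>
    rw [Finset.sum_Ioc_succ_top (by omega)]
    have e1 : (-(((m+1 : ℕ) : ℤ)) + 1) = -((m:ℤ)) := by push_cast; ring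
    have e2 : q ^ (-(((m+1 : ℕ) : ℤ) - 1)) = q ^ (-((m:ℤ))) := by
      congr 1; push_cast; ring
    have e3 : q ^ (-((m : ℤ) - 1)) = q * q ^ (-((m:ℤ))) := by
      rw [show (-((m : ℤ) - 1)) = 1 + (-((m:ℤ))) by ring, zpow_add₀ hqne, zpow_one]
    have hpos : (0:ℝ) < q ^ (-((m:ℤ))) := zpow_pos hq0 _
    rw [e2]
    nlinarith [ih]

/-- **Theorem 2 applies to the exponential model when `q ≥ 2`.**
Let `q ≥ 2`, `R > 0`, and let `a ∈ ℝ^N` have sorted coefficient magnitudes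
`|a_{h_1}| ≥ … ≥ |a_{h_N}|` with `|a_{h_n}| = R·q^(−(n−1))` (arbitrary signs),
where `h` is injective on `{1, …, N}`. Let `1 ≤ k` and `k+1 ≤ m ≤ N`. With
`u = min { |∑_{n∈𝒜} a n| : ∅ ≠ 𝒜 ⊆ {h_1, …, h_k} }` and
`r = ∑_{n=k+1}^{m} |a_{h_n}|`, we have `u > r`. -/
theorem exponential_model_u_gt_r
    (q R : ℝ) (hq : 2 ≤ q) (hR : 0 < R)
    (N k m : ℕ) (hk : 1 ≤ k) (hm1 : k + 1 ≤ m) (hm2 : m ≤ N)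
    (a : Fin N → ℝ) (h : ℕ → Fin N)
    (hinj : Set.InjOn h (Set.Icc 1 N))
    (hmag : ∀ n, 1 ≤ n → n ≤ N → |a (h n)| = R * q ^ (-((n : ℤ) - 1)))
    (u : ℝ)
    (hu : IsLeast ((fun 𝒜 : Finset (Fin N) => |∑ i ∈ 𝒜, a i|) ''
      {𝒜 : Finset (Fin N) | 𝒜 ⊆ (Finset.Icc 1 k).image h ∧ 𝒜.Nonempty}) u)
    (r : ℝ) (hr : r = ∑ n ∈ Finset.Icc (k + 1) m, |a (h n)|) :
    r < u := by
  obtain ⟨⟨𝒜, ⟨h𝒜sub, h𝒜ne⟩, hu_eq⟩, -⟩ := hu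
  subst hr
  rw [← hu_eq]
  have hq0 : (0:ℝ) < q := by linarith
  have hkN : k ≤ N := by omega
  set S := (Finset.Icc 1 k).filter (fun n => h n ∈ 𝒜) with hS
  have hSmem : ∀ n ∈ S, 1 ≤ n ∧ n ≤ k := by
    intro n hn
    have := (Finset.mem_filter.mp hn).1
    exact Finset.mem_Icc.mp this
  have himg : S.image h = 𝒜 := by
    ext i
    simp only [Finset.mem_image, hS, Finset.mem_filter]
    constructor
    · rintro ⟨n, ⟨hn, hi⟩, rfl⟩; exact hi
    · intro hi
      obtain ⟨n, hn, rfl⟩ := Finset.mem_image.mp (h𝒜sub hi)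
      exact ⟨n, ⟨hn, hi⟩, rfl⟩
  have hSinj : Set.InjOn h S := by
    intro x hx y hy hxy
    exact hinj (Set.mem_Icc.mpr ⟨(hSmem x hx).1, le_trans (hSmem x hx).2 hkN⟩)
      (Set.mem_Icc.mpr ⟨(hSmem y hy).1, le_trans (hSmem y hy).2 hkN⟩) hxy
  have hsum : ∑ i ∈ 𝒜, a i = ∑ n ∈ S, a (h n) := by
    rw [← himg, Finset.sum_image (fun x hx y hy => hSinj hx hy)]
  have hSne : S.Nonempty := by
    obtain ⟨i, hi⟩ := h𝒜ne
    obtain ⟨n, hn, rfl⟩ := Finset.mem_image.mp (h𝒜sub hi)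
    exact ⟨n, Finset.mem_filter.mpr ⟨hn, hi⟩⟩
  set n₀ := S.min' hSne with hn₀def
  have hn₀S : n₀ ∈ S := S.min'_mem hSne
  have hn₀1 : 1 ≤ n₀ := (hSmem _ hn₀S).1
  have hn₀k : n₀ ≤ k := (hSmem _ hn₀S).2
  -- triangle inequality
  have hsplit : ∑ n ∈ S, a (h n) = a (h n₀) + ∑ n ∈ S.erase n₀, a (h n) :=
    (Finset.add_sum_erase S _ hn₀S).symm
  have htri : |a (h n₀)| - |∑ n ∈ S.erase n₀, a (h n)| ≤ |∑ n ∈ S, a (h n)| := by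
    rw [hsplit]
    have := abs_sub_abs_le_abs_sub (a (h n₀)) (-(∑ n ∈ S.erase n₀, a (h n)))
    simpa [sub_neg_eq_add] using this
  -- bound the erased sum
  have herase_sub : S.erase n₀ ⊆ Finset.Ioc n₀ k := by
    intro n hn
    have hnS := Finset.mem_of_mem_erase hn
    have hne := Finset.ne_of_mem_erase hn
    have := S.min'_le n hnS
    exact Finset.mem_Ioc.mpr ⟨lt_of_le_of_ne this (Ne.symm hne), (hSmem n hnS).2⟩
  have herase : |∑ n ∈ S.erase n₀, a (h n)| ≤ ∑ n ∈ Finset.Ioc n₀ k, |a (h n)| := by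
    calc |∑ n ∈ S.erase n₀, a (h n)| ≤ ∑ n ∈ S.erase n₀, |a (h n)| :=
          Finset.abs_sum_le_sum_abs _ _
      _ ≤ ∑ n ∈ Finset.Ioc n₀ k, |a (h n)| :=
          Finset.sum_le_sum_of_subset_of_nonneg herase_sub (fun _ _ _ => abs_nonneg _)
  -- combine the two tails
  have hrIoc : ∑ n ∈ Finset.Icc (k + 1) m, |a (h n)| = ∑ n ∈ Finset.Ioc k m, |a (h n)| := by
    rw [Finset.Icc_add_one_left_eq_Ioc]
  have hconsec : ∑ n ∈ Finset.Ioc n₀ k, |a (h n)| + ∑ n ∈ Finset.Ioc k m, |a (h n)|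
      = ∑ n ∈ Finset.Ioc n₀ m, |a (h n)| :=
    Finset.sum_Ioc_consecutive _ hn₀k (by omega)
  -- rewrite magnitudes
  have htail : ∑ n ∈ Finset.Ioc n₀ m, |a (h n)| = R * ∑ n ∈ Finset.Ioc n₀ m, q ^ (-((n : ℤ) - 1)) := by
    rw [Finset.mul_sum]
    apply Finset.sum_congr rfl
    intro n hn
    obtain ⟨hn1, hn2⟩ := Finset.mem_Ioc.mp hn
    exact hmag n (by omega) (by omega)
  have hhead : |a (h n₀)| = R * q ^ (-((n₀ : ℤ) - 1)) :=
    hmag n₀ hn₀1 (by omega)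
  have hgeo := geo_bound q hq n₀ m (by omega)
  have hmpos : (0:ℝ) < q ^ (-((m : ℤ) - 1)) := zpow_pos hq0 _
  have key : ∑ n ∈ Finset.Ioc n₀ m, |a (h n)| < |a (h n₀)| := by
    rw [htail, hhead]
    have : R * ∑ n ∈ Finset.Ioc n₀ m, q ^ (-((n : ℤ) - 1)) ≤
        R * (q ^ (-((n₀ : ℤ) - 1)) - q ^ (-((m : ℤ) - 1))) :=
      mul_le_mul_of_nonneg_left hgeo (le_of_lt hR)
    nlinarith
  rw [hrIoc]
  simp only [hsum]
  linarith [htri, herase, hconsec, key]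
end
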